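/- Let F be continuous on [a,b] and differentiable on (a,b), with least concave majorant F̂ and Z_F = {x ∈ [a,b] : F̂(x) = F(x)}. Let M = max F, and let c1 be the smallest point at which F attains M. Suppose (α,β) is a connected component of [a,b] \ Z_F contained in [a,c1) with α > a. Then F'(α) > 0, F(x) < F(α) + (x−α)F'(α) for every x ∈ (α,β), and consequently F is not convex (in particular not affine) on any interval [α, α+η] with 0 < η ≤ β−α. -/

import Mathlib

/-!
On a component `(α, β)` of the non-contact set, `F` stays strictly below the secant line `L`
through `(α, F α)` and `(β, F β)`, and below `L` on all of `[a, b]`: outside `(α, β)` because the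
concave majorant, which agrees with `F` at `α` and `β`, lies below `L` there; inside, because an
interior maximum `d ≥ 0` of `F - L` on `[α, β]` would make `L + d` a concave majorant touching `F`
inside the gap. As `α` is interior to `[a, b]`, the line `L` is tangent to `F` at `α`, so
`F' α` is its slope, which is positive because `L c1 ≥ F c1 = M > F α`. A function convex near `α`
would lie above that tangent.
-/

open Set Filter Topology

/-- The least concave majorant of `F` on `[a, b]`. -/
noncomputable def leastConcaveMajorant (a b : ℝ) (F : ℝ → ℝ) (x : ℝ) : ℝ :=
  sInf {y : ℝ | ∃ G : ℝ → ℝ, ConcaveOn ℝ (Set.Icc a b) G ∧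
    (∀ z ∈ Set.Icc a b, F z ≤ G z) ∧ y = G x}

section LeastConcaveMajorant

variable {a b x : ℝ} {F G : ℝ → ℝ}

lemma leastConcaveMajorant_le (hG : ConcaveOn ℝ (Icc a b) G) (hFG : ∀ z ∈ Icc a b, F z ≤ G z)
    (hx : x ∈ Icc a b) : leastConcaveMajorant a b F x ≤ G x :=
  csInf_le ⟨F x, by rintro y ⟨G', -, hFG', rfl⟩; exact hFG' x hx⟩ ⟨G, hG, hFG, rfl⟩

lemma le_leastConcaveMajorant_of_forall (hF : BddAbove (F '' Icc a b)) {y : ℝ}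
    (h : ∀ G : ℝ → ℝ, ConcaveOn ℝ (Icc a b) G → (∀ z ∈ Icc a b, F z ≤ G z) → y ≤ G x) :
    y ≤ leastConcaveMajorant a b F x := by
  obtain ⟨M, hM⟩ := hF
  refine le_csInf ⟨M, fun _ ↦ M, concaveOn_const M (convex_Icc a b),
    fun z hz ↦ hM (mem_image_of_mem F hz), rfl⟩ ?_
  rintro _ ⟨G, hG, hFG, rfl⟩
  exact h G hG hFG

lemma le_leastConcaveMajorant (hF : BddAbove (F '' Icc a b)) (hx : x ∈ Icc a b) :
    F x ≤ leastConcaveMajorant a b F x :=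
  le_leastConcaveMajorant_of_forall hF fun _ _ hFG ↦ hFG x hx

lemma concaveOn_leastConcaveMajorant (hF : BddAbove (F '' Icc a b)) :
    ConcaveOn ℝ (Icc a b) (leastConcaveMajorant a b F) := by
  refine ⟨convex_Icc a b, fun u hu v hv p q hp hq hpq ↦ ?_⟩
  refine le_leastConcaveMajorant_of_forall hF fun G hG hFG ↦ ?_
  calc p • leastConcaveMajorant a b F u + q • leastConcaveMajorant a b F v
      ≤ p • G u + q • G v := by
        gcongr
        exacts [leastConcaveMajorant_le hG hFG hu, leastConcaveMajorant_le hG hFG hv]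
    _ ≤ G (p • u + q • v) := hG.2 hu hv hp hq hpq

lemma leastConcaveMajorant_eq_of_le_of_eq (hF : BddAbove (F '' Icc a b))
    (hG : ConcaveOn ℝ (Icc a b) G) (hFG : ∀ z ∈ Icc a b, F z ≤ G z) (hx : x ∈ Icc a b)
    (hGx : G x = F x) : leastConcaveMajorant a b F x = F x :=
  le_antisymm (hGx ▸ leastConcaveMajorant_le hG hFG hx) (le_leastConcaveMajorant hF hx)

end LeastConcaveMajorant

noncomputable def secantLine (f : ℝ → ℝ) (x y z : ℝ) : ℝ := f x + (z - x) * slope f x y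

section SecantLine

variable {f g : ℝ → ℝ} {x y z : ℝ}

@[simp] lemma secantLine_left : secantLine f x y x = f x := by simp [secantLine]

lemma sub_mul_slope (f : ℝ → ℝ) (x y : ℝ) : (y - x) * slope f x y = f y - f x :=
  sub_smul_slope f x y

lemma secantLine_right : secantLine f x y y = f y := by
  simp [secantLine, sub_mul_slope]

lemma secantLine_congr (hx : f x = g x) (hy : f y = g y) : secantLine f x y = secantLine g x y := by
  ext z; simp only [secantLine, slope_def_field, hx, hy]

lemma hasDerivAt_secantLine : HasDerivAt (secantLine f x y) (slope f x y) z := by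
  unfold secantLine
  simpa using (((hasDerivAt_id z).sub_const x).mul_const (slope f x y)).const_add (f x)

lemma continuous_secantLine : Continuous (secantLine f x y) := by
  unfold secantLine; fun_prop

lemma concaveOn_secantLine_add {s : Set ℝ} (hs : Convex ℝ s) (d : ℝ) :
    ConcaveOn ℝ s fun z ↦ secantLine f x y z + d := by
  refine ⟨hs, fun u _ v _ p q _ _ hpq ↦ le_of_eq ?_⟩
  simp only [secantLine, smul_eq_mul]
  linear_combination (f x - x * slope f x y + d) * hpq

lemma ConcaveOn.le_secantLine {s : Set ℝ} (hf : ConcaveOn ℝ s f) (hx : x ∈ s) (hy : y ∈ s)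
    (hz : z ∈ s) (hxy : x < y) (hzxy : z ∉ Ioo x y) : f z ≤ secantLine f x y z := by
  have hslope := hf.slope_anti hx
  have hy' : y ∈ s \ {x} := ⟨hy, hxy.ne'⟩
  have key : f z - secantLine f x y z = (z - x) * (slope f x z - slope f x y) := by
    rw [secantLine, mul_sub, sub_mul_slope]; ring
  rcases lt_trichotomy z x with hzx | rfl | hxz
  · have := hslope ⟨hz, hzx.ne⟩ hy' (hzx.trans hxy).le
    nlinarith
  · simp
  · have hyz : y ≤ z := not_lt.1 fun h ↦ hzxy ⟨hxz, h⟩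
    have := hslope hy' ⟨hz, hxz.ne'⟩ hyz
    nlinarith

end SecantLine

section ConnectedComponent

variable {S : Set ℝ} {α β t : ℝ}

lemma left_notMem_of_Ioo_eq_connectedComponentIn (h : Ioo α β = connectedComponentIn S t)
    (ht : t ∈ S) : α ∉ S := by
  intro hα
  have htαβ : t ∈ Ioo α β := h ▸ mem_connectedComponentIn ht
  have hαβ : α < β := htαβ.1.trans htαβ.2
  have hsub : Ico α β ⊆ connectedComponentIn S t := by
    refine isPreconnected_Ico.subset_connectedComponentIn (mem_Ico_of_Ioo htαβ) ?_
    rw [← Ioo_insert_left hαβ]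
    exact insert_subset hα (h ▸ connectedComponentIn_subset S t)
  exact (h ▸ hsub (left_mem_Ico.2 hαβ)).1.false

lemma right_notMem_of_Ioo_eq_connectedComponentIn (h : Ioo α β = connectedComponentIn S t)
    (ht : t ∈ S) : β ∉ S := by
  intro hβ
  have htαβ : t ∈ Ioo α β := h ▸ mem_connectedComponentIn ht
  have hαβ : α < β := htαβ.1.trans htαβ.2
  have hsub : Ioc α β ⊆ connectedComponentIn S t := by
    refine isPreconnected_Ioc.subset_connectedComponentIn (mem_Ioc_of_Ioo htαβ) ?_
    rw [← Ioo_insert_right hαβ]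
    exact insert_subset hβ (h ▸ connectedComponentIn_subset S t)
  exact (h ▸ hsub (right_mem_Ioc.2 hαβ)).2.false

end ConnectedComponent

lemma Icc_subset_of_Ioo_subset {α β a b : ℝ} (hαβ : α < β) (h : Ioo α β ⊆ Icc a b) :
    Icc α β ⊆ Icc a b := by
  rw [← closure_Ioo hαβ.ne]
  exact closure_minimal h isClosed_Icc

structure IsConcaveMajorantGap (a b : ℝ) (F : ℝ → ℝ) (α β : ℝ) : Prop where
  le_left : a ≤ α
  lt : α < β
  right_le : β ≤ b
  eq_left : leastConcaveMajorant a b F α = F α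
  eq_right : leastConcaveMajorant a b F β = F β
  ne : ∀ x ∈ Ioo α β, leastConcaveMajorant a b F x ≠ F x

section Gap

variable {a b α β : ℝ} {F : ℝ → ℝ}

namespace IsConcaveMajorantGap

lemma Icc_subset (h : IsConcaveMajorantGap a b F α β) : Icc α β ⊆ Icc a b :=
  Icc_subset_Icc h.le_left h.right_le

lemma le_secantLine_of_notMem_Ioo (h : IsConcaveMajorantGap a b F α β)
    (hF : BddAbove (F '' Icc a b)) {x : ℝ} (hx : x ∈ Icc a b) (hxαβ : x ∉ Ioo α β) :
    F x ≤ secantLine F α β x :=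
  calc F x ≤ leastConcaveMajorant a b F x := le_leastConcaveMajorant hF hx
    _ ≤ secantLine (leastConcaveMajorant a b F) α β x :=
      (concaveOn_leastConcaveMajorant hF).le_secantLine (h.Icc_subset (left_mem_Icc.2 h.lt.le))
        (h.Icc_subset (right_mem_Icc.2 h.lt.le)) hx h.lt hxαβ
    _ = secantLine F α β x := by rw [secantLine_congr h.eq_left h.eq_right]

lemma not_isMaxOn_sub_secantLine (h : IsConcaveMajorantGap a b F α β)
    (hF : BddAbove (F '' Icc a b)) {x₀ : ℝ} (hx₀ : x₀ ∈ Ioo α β) :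
    ¬ IsMaxOn (fun x ↦ F x - secantLine F α β x) (Icc α β) x₀ := by
  intro hmax
  set d := F x₀ - secantLine F α β x₀
  have hd : 0 ≤ d := sub_nonneg.2 (by simpa using hmax (left_mem_Icc.2 h.lt.le))
  have hmajor : ∀ z ∈ Icc a b, F z ≤ secantLine F α β z + d := by
    intro z hz
    by_cases hzαβ : z ∈ Ioo α β
    · have : F z - secantLine F α β z ≤ d := hmax (Ioo_subset_Icc_self hzαβ)
      linarith
    · linarith [h.le_secantLine_of_notMem_Ioo hF hz hzαβ]
  exact h.ne x₀ hx₀ (leastConcaveMajorant_eq_of_le_of_eq hF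
    (concaveOn_secantLine_add (convex_Icc a b) d) hmajor
    (h.Icc_subset (Ioo_subset_Icc_self hx₀)) (by ring))

lemma le_secantLine (h : IsConcaveMajorantGap a b F α β) (hF : BddAbove (F '' Icc a b))
    (hFc : ContinuousOn F (Icc α β)) {x : ℝ} (hx : x ∈ Icc a b) : F x ≤ secantLine F α β x := by
  by_cases hxαβ : x ∈ Ioo α β
  · obtain ⟨x₀, hx₀, hmax⟩ := isCompact_Icc.exists_isMaxOn (nonempty_Icc.2 h.lt.le)
      (f := fun x ↦ F x - secantLine F α β x) (hFc.sub continuous_secantLine.continuousOn)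
    have hx₀αβ : x₀ = α ∨ x₀ = β := by
      by_contra! hx₀'
      exact h.not_isMaxOn_sub_secantLine hF ⟨hx₀.1.lt_of_ne' hx₀'.1, hx₀.2.lt_of_ne hx₀'.2⟩ hmax
    have hzero : F x₀ - secantLine F α β x₀ = 0 := by
      rcases hx₀αβ with rfl | rfl <;> simp [secantLine_right]
    linarith [isMaxOn_iff.1 hmax x (Ioo_subset_Icc_self hxαβ)]
  · exact h.le_secantLine_of_notMem_Ioo hF hx hxαβ

lemma lt_secantLine (h : IsConcaveMajorantGap a b F α β) (hF : BddAbove (F '' Icc a b))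
    (hFc : ContinuousOn F (Icc α β)) {x : ℝ} (hx : x ∈ Ioo α β) : F x < secantLine F α β x := by
  refine lt_of_le_of_ne (h.le_secantLine hF hFc (h.Icc_subset (Ioo_subset_Icc_self hx)))
    fun hxeq ↦ h.not_isMaxOn_sub_secantLine hF hx (isMaxOn_iff.2 fun z hz ↦ ?_)
  have := h.le_secantLine hF hFc (h.Icc_subset hz)
  linarith

lemma of_Ioo_eq_connectedComponentIn {t : ℝ}
    (hJ : Ioo α β = connectedComponentIn
      (Icc a b \ {x ∈ Icc a b | leastConcaveMajorant a b F x = F x}) t)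
    (ht : t ∈ Icc a b \ {x ∈ Icc a b | leastConcaveMajorant a b F x = F x}) :
    IsConcaveMajorantGap a b F α β := by
  have htαβ : t ∈ Ioo α β := hJ ▸ mem_connectedComponentIn ht
  have hαβ : α < β := htαβ.1.trans htαβ.2
  have hsub : Ioo α β ⊆ Icc a b \ {x ∈ Icc a b | leastConcaveMajorant a b F x = F x} :=
    hJ ▸ connectedComponentIn_subset _ _
  have hαβab := Icc_subset_of_Ioo_subset hαβ (hsub.trans sdiff_subset)
  have hendpoint : ∀ x ∈ Icc a b,
      x ∉ Icc a b \ {x ∈ Icc a b | leastConcaveMajorant a b F x = F x} →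
        leastConcaveMajorant a b F x = F x :=
    fun x hx hxS ↦ by_contra fun h ↦ hxS ⟨hx, fun hZ ↦ h hZ.2⟩
  exact
    { le_left := (hαβab (left_mem_Icc.2 hαβ.le)).1
      lt := hαβ
      right_le := (hαβab (right_mem_Icc.2 hαβ.le)).2
      eq_left := hendpoint α (hαβab (left_mem_Icc.2 hαβ.le))
        (left_notMem_of_Ioo_eq_connectedComponentIn hJ ht)
      eq_right := hendpoint β (hαβab (right_mem_Icc.2 hαβ.le))
        (right_notMem_of_Ioo_eq_connectedComponentIn hJ ht)
      ne := fun x hx hx' ↦ (hsub hx).2 ⟨(hsub hx).1, hx'⟩ }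

end IsConcaveMajorantGap

end Gap

lemma deriv_eq_of_eventually_le_of_eq {f g : ℝ → ℝ} {x g' : ℝ} (hf : DifferentiableAt ℝ f x)
    (hg : HasDerivAt g g' x) (hle : f ≤ᶠ[𝓝 x] g) (heq : f x = g x) : deriv f x = g' := by
  have hmax : IsLocalMax (fun y ↦ f y - g y) x := by
    filter_upwards [hle] with y hy
    linarith
  have := hmax.deriv_eq_zero
  rw [deriv_fun_sub hf hg.differentiableAt, hg.deriv] at this
  linarith

lemma not_convexOn_Icc_of_lt_tangent {f : ℝ → ℝ} {x y z : ℝ} (hf : DifferentiableAt ℝ f x)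
    (hxy : x < y) (hyz : y ≤ z) (hlt : f y < f x + (y - x) * deriv f x) :
    ¬ ConvexOn ℝ (Icc x z) f := by
  intro hconv
  have := hconv.deriv_le_slope (left_mem_Icc.2 (hxy.le.trans hyz)) ⟨hxy.le, hyz⟩ hxy hf
  have := mul_le_mul_of_nonneg_left this (sub_nonneg.2 hxy.le)
  rw [sub_mul_slope] at this
  linarith

theorem stmt9_general (a b : ℝ) (F : ℝ → ℝ)
    (hF : ContinuousOn F (Set.Icc a b))
    (hFdiff : ∀ x ∈ Set.Ioo a b, DifferentiableAt ℝ F x)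
    (Z : Set ℝ)
    (hZ : Z = {x ∈ Set.Icc a b | leastConcaveMajorant a b F x = F x})
    (M : ℝ) (hM : ∀ x ∈ Set.Icc a b, F x ≤ M)
    (c1 : ℝ) (hc1 : c1 = sInf {x ∈ Set.Icc a b | F x = M})
    (hc1mem : c1 ∈ Set.Icc a b) (hc1max : F c1 = M)
    (α β : ℝ) (t : ℝ) (ht : t ∈ Set.Icc a b \ Z)
    (hJ : Set.Ioo α β = connectedComponentIn (Set.Icc a b \ Z) t)
    (hsub : Set.Ioo α β ⊆ Set.Ico a c1) (hα : a < α) :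
    0 < deriv F α ∧
    (∀ x ∈ Set.Ioo α β, F x < F α + (x - α) * deriv F α) ∧
    (∀ η : ℝ, 0 < η → η ≤ β - α → ¬ ConvexOn ℝ (Set.Icc α (α + η)) F) := by
  subst hZ
  have hgap := IsConcaveMajorantGap.of_Ioo_eq_connectedComponentIn hJ ht
  have hαc1 : α < c1 :=
    hgap.lt.trans_le (Icc_subset_of_Ioo_subset hgap.lt (hsub.trans Ico_subset_Icc_self)
      (right_mem_Icc.2 hgap.lt.le)).2
  have hbdd : BddAbove (F '' Icc a b) := ⟨M, forall_mem_image.2 hM⟩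
  have hFc : ContinuousOn F (Icc α β) := hF.mono hgap.Icc_subset
  have hαb : α < b := hgap.lt.trans_le hgap.right_le
  have hdiff : DifferentiableAt ℝ F α := hFdiff α ⟨hα, hαb⟩
  have hderiv : deriv F α = slope F α β :=
    deriv_eq_of_eventually_le_of_eq hdiff hasDerivAt_secantLine
      (eventually_of_mem (Icc_mem_nhds hα hαb) fun x hx ↦ hgap.le_secantLine hbdd hFc hx)
      secantLine_left.symm
  have hlt : ∀ x ∈ Ioo α β, F x < F α + (x - α) * deriv F α := fun x hx ↦
    hderiv ▸ hgap.lt_secantLine hbdd hFc hx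
  have hFαM : F α < M := (hM α ⟨hα.le, hαb.le⟩).lt_of_ne fun h ↦
    hαc1.not_ge (hc1 ▸ csInf_le ⟨a, fun x hx ↦ hx.1.1⟩ ⟨⟨hα.le, hαb.le⟩, h⟩)
  have hpos : 0 < deriv F α := by
    have := hgap.le_secantLine hbdd hFc hc1mem
    rw [secantLine, hc1max, ← hderiv] at this
    exact pos_of_mul_pos_right (a := c1 - α) (by linarith) (by linarith)
  refine ⟨hpos, hlt, fun η hη hηβ ↦ not_convexOn_Icc_of_lt_tangent hdiff (y := α + η / 2)
    (by linarith) (by linarith) (hlt _ ⟨by linarith, by linarith⟩)⟩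

theorem stmt9 (a b : ℝ) (hab : a < b) (F : ℝ → ℝ)
    (hF : ContinuousOn F (Set.Icc a b))
    (hFdiff : ∀ x ∈ Set.Ioo a b, DifferentiableAt ℝ F x)
    (Z : Set ℝ)
    (hZ : Z = {x ∈ Set.Icc a b | leastConcaveMajorant a b F x = F x})
    (M : ℝ) (hM : ∀ x ∈ Set.Icc a b, F x ≤ M)
    (c1 : ℝ) (hc1 : c1 = sInf {x ∈ Set.Icc a b | F x = M})
    (hc1mem : c1 ∈ Set.Icc a b) (hc1max : F c1 = M)
    (α β : ℝ) (t : ℝ) (ht : t ∈ Set.Icc a b \ Z)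
    (hJ : Set.Ioo α β = connectedComponentIn (Set.Icc a b \ Z) t)
    (hsub : Set.Ioo α β ⊆ Set.Ico a c1) (hα : a < α) :
    0 < deriv F α ∧
    (∀ x ∈ Set.Ioo α β, F x < F α + (x - α) * deriv F α) ∧
    (∀ η : ℝ, 0 < η → η ≤ β - α → ¬ ConvexOn ℝ (Set.Icc α (α + η)) F) :=
  stmt9_general a b F hF hFdiff Z hZ M hM c1 hc1 hc1mem hc1max α β t ht hJ hsub hα
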